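/- arXiv:2109.00409 — 2 statements merged into one kernel-verified Lean document; each statement's English description precedes it below -/
import Mathlib

section
/- Let G be a digraph in which every arc is simple, i.e., for all vertices u, v it is not the case that both (u,v) and (v,u) are arcs (A(G) u v = 1 implies A(G) v u = 0). Then for every 0 ≤ α < 1, E_α(G) = α²·Σ_{v}(d⁺(v))². -/
open Polynomial Matrix Finset

/-- The outdegree of a vertex `v` of the digraph with adjacency matrix `A`. -/
noncomputable def outdeg {V : Type*} [Fintype V] (A : Matrix V V ℝ) (v : V) : ℝ := ∑ w, A v w

/-- The `A_α`-matrix `α·D⁺ + (1-α)·A` of a digraph with adjacency matrix `A`. -/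
noncomputable def Aalpha {V : Type*} [Fintype V] [DecidableEq V] (α : ℝ) (A : Matrix V V ℝ) :
    Matrix V V ℝ :=
  α • Matrix.diagonal (outdeg A) + (1 - α) • A

/-- The spectral radius of a real square matrix: the maximum modulus of its complex
eigenvalues (roots of the characteristic polynomial over `ℂ`). -/
noncomputable def specRad {V : Type*} [Fintype V] [DecidableEq V] (M : Matrix V V ℝ) : ℝ :=
  sSup {x : ℝ | ∃ z : ℂ, (M.map ((↑) : ℝ → ℂ)).charpoly.IsRoot z ∧ ‖z‖ = x}

/-- The `A_α` energy of a digraph: the sum of the squares of the eigenvalues of its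
`A_α`-matrix, equivalently `trace (A_α(G)²)`. -/
noncomputable def Ealpha {V : Type*} [Fintype V] [DecidableEq V] (α : ℝ) (A : Matrix V V ℝ) : ℝ :=
  Matrix.trace (Aalpha α A * Aalpha α A)

theorem Matrix.trace_mul_self_eq_sum_sq_diag {V R : Type*} [Fintype V] [CommSemiring R]
    (M : Matrix V V R) (hM : ∀ u v, u ≠ v → M u v * M v u = 0) :
    trace (M * M) = ∑ v, M v v ^ 2 := by
  refine sum_congr rfl fun u _ => ?_
  rw [diag_apply, mul_apply, sum_eq_single u (fun v _ huv => hM u v huv.symm) (by simp), sq]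

theorem Aalpha_apply_of_ne {V : Type*} [Fintype V] [DecidableEq V] (α : ℝ) (A : Matrix V V ℝ)
    {u v : V} (huv : u ≠ v) : Aalpha α A u v = (1 - α) * A u v := by
  simp [Aalpha, diagonal_apply_ne _ huv]

theorem Aalpha_apply_self {V : Type*} [Fintype V] [DecidableEq V] (α : ℝ) (A : Matrix V V ℝ)
    (v : V) : Aalpha α A v v = α * outdeg A v + (1 - α) * A v v := by
  simp [Aalpha]

theorem mul_apply_swap_eq_zero_of_simple {V : Type*} (A : Matrix V V ℝ)
    (h01 : ∀ u v, A u v = 0 ∨ A u v = 1) (hsimple : ∀ u v, A u v = 1 → A v u = 0) (u v : V) :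
    A u v * A v u = 0 := by
  rcases h01 u v with h | h
  · rw [h, zero_mul]
  · rw [hsimple u v h, mul_zero]

theorem stmt6_general {V : Type*} [Fintype V] [DecidableEq V] (A : Matrix V V ℝ)
    (h01 : ∀ u v, A u v = 0 ∨ A u v = 1) (hloop : ∀ v, A v v = 0)
    (hsimple : ∀ u v, A u v = 1 → A v u = 0)
    (α : ℝ) :
    Ealpha α A = α ^ 2 * ∑ v, (outdeg A v) ^ 2 := by
  have hoff : ∀ u v, u ≠ v → Aalpha α A u v * Aalpha α A v u = 0 := fun u v huv => by
    rw [Aalpha_apply_of_ne α A huv, Aalpha_apply_of_ne α A huv.symm]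
    linear_combination (1 - α) ^ 2 * mul_apply_swap_eq_zero_of_simple A h01 hsimple u v
  rw [Ealpha, trace_mul_self_eq_sum_sq_diag _ hoff, mul_sum]
  refine sum_congr rfl fun v _ => ?_
  rw [Aalpha_apply_self, hloop]
  ring

/-- If every arc of the digraph `G` is simple (no symmetric pair of arcs), then
`E_α(G) = α²·Σ_v (d⁺(v))²`. -/
theorem stmt6 {V : Type*} [Fintype V] [DecidableEq V] (A : Matrix V V ℝ)
    (h01 : ∀ u v, A u v = 0 ∨ A u v = 1) (hloop : ∀ v, A v v = 0)
    (hsimple : ∀ u v, A u v = 1 → A v u = 0)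
    (α : ℝ) (hα0 : 0 ≤ α) (hα1 : α < 1) :
    Ealpha α A = α ^ 2 * ∑ v, (outdeg A v) ^ 2 :=
  stmt6_general A h01 hloop hsimple α
end

section
/- Let G ∈ 𝒢_n^m whose strong component G* is a directed cycle of length m ≥ 3 (so every vertex of S has within-S outdegree 1, G* has no symmetric arcs, and c₂(G*) = 0), and let 0 ≤ α < 1. Then α²·n ≤ E_α(G) ≤ α²·((n−m+1)² + m − 1). For 0 < α < 1, the lower bound is attained if and only if every hung tree is an in-tree with root at its cycle vertex, and the upper bound is attained if and only if all hung trees but one are trivial (single vertices) and the remaining one is an out-star of size n−m+1 whose centre is its cycle vertex. -/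
open Polynomial Matrix Finset

/-- The outdegree of `s` within the vertex set `S` (the within-`S` outdegree `d*(s)`). -/
noncomputable def dStar {V : Type*} [Fintype V] (A : Matrix V V ℝ) (S : Finset V) (s : V) : ℝ :=
  ∑ v ∈ S, A s v

/-- The size `n_s` of the fiber `r⁻¹(s)`. -/
def fibCard {V : Type*} [Fintype V] [DecidableEq V] (r : V → V) (s : V) : ℕ :=
  (Finset.univ.filter (fun v => r v = s)).card

/-- The underlying undirected graph of the induced subdigraph on the fiber `r⁻¹(s)`. -/
def fiberGraph {V : Type*} (A : Matrix V V ℝ) (r : V → V) (s : V) :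
    SimpleGraph {v : V // r v = s} where
  Adj u w := u ≠ w ∧ (A u.1 w.1 = 1 ∨ A w.1 u.1 = 1)
  symm := ⟨fun _ _ h => ⟨h.1.symm, h.2.symm⟩⟩
  loopless := ⟨fun _ h => h.1 rfl⟩

/-- The principal submatrix of `A` with rows and columns indexed by `S`. -/
def subm {V : Type*} (A : Matrix V V ℝ) (S : Finset V) :
    Matrix {v : V // v ∈ S} {v : V // v ∈ S} ℝ :=
  A.submatrix (fun x => x.1) (fun x => x.1)

/-- `c₂(G*) = trace(A*²)`, the number of closed walks of length 2 in the strong component. -/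
noncomputable def c2star {V : Type*} [Fintype V] [DecidableEq V] (A : Matrix V V ℝ)
    (S : Finset V) : ℝ :=
  Matrix.trace (subm A S * subm A S)

/-- Membership in the class `𝒢_n^m`: `A` is the adjacency matrix of a digraph of order `n`
with a unique strong component on the vertex set `S` of order `m`, with a directed tree
(the fiber `r⁻¹(s)`) hung on each vertex `s ∈ S`. -/
structure IsGnm {V : Type*} [Fintype V] [DecidableEq V] (A : Matrix V V ℝ) (S : Finset V)
    (r : V → V) (n m : ℕ) : Prop where
  zero_one : ∀ u v, A u v = 0 ∨ A u v = 1
  loopless : ∀ v, A v v = 0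
  card_V : Fintype.card V = n
  card_S : S.card = m
  two_le_m : 2 ≤ m
  m_lt_n : m < n
  strong : ∀ u ∈ S, ∀ v ∈ S, Relation.ReflTransGen (fun a b => a ∈ S ∧ b ∈ S ∧ A a b = 1) u v
  r_mem : ∀ v, r v ∈ S
  r_fix : ∀ s ∈ S, r s = s
  arc_cases : ∀ u v, A u v = 1 → (u ∈ S ∧ v ∈ S) ∨ r u = r v
  fiber_no_symm : ∀ u v, r u = r v → A u v = 1 → A v u = 0
  fiber_tree : ∀ s ∈ S, (fiberGraph A r s).IsTree

/-- Every hung tree is an in-tree with root at its vertex of `S`: inside each fiber the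
root has outdegree `0` and every other vertex has outdegree `1`. -/
def InTrees {V : Type*} [Fintype V] [DecidableEq V] (A : Matrix V V ℝ) (S : Finset V)
    (r : V → V) : Prop :=
  (∀ v, v ∉ S → (∑ w ∈ Finset.univ.filter (fun w => r w = r v), A v w) = 1) ∧
  (∀ s ∈ S, (∑ w ∈ Finset.univ.filter (fun w => r w = s), A s w) = 0)

/-- All hung trees are trivial except the one at `v`, which is an out-star with centre `v`. -/
def OutStarAt {V : Type*} [Fintype V] [DecidableEq V] (A : Matrix V V ℝ) (S : Finset V)
    (r : V → V) (v : V) : Prop :=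
  (∀ s ∈ S, s ≠ v → fibCard r s = 1) ∧ (∀ u w, r u = v → A u w = 1 → u = v)

/-!
Without symmetric arcs the off-diagonal entries of `A_α` contribute nothing to `trace (A_α²)`,
so `E_α = α² Σ d⁺(v)²`. On the cycle-with-trees digraph `d⁺(v) = [v ∈ S] + t(v)`, where `t(v)` is
the outdegree of `v` inside its hung tree, and `Σ t = n - m` because a tree on `n_s` vertices has
`n_s - 1` arcs. Hence `Σ d⁺ = n`, and
* `Σ d⁺² = n + Σ (d⁺ - 1)²`: the lower bound, attained iff every outdegree is `1`;
* `Σ d⁺² = (n-m+1)² + m - 1 - 2 Σ_{v ∉ S} t(v) - ((Σ t)² - Σ t²)`: the upper bound, attained iff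
  `t` is supported on a single vertex of `S`.
-/

theorem Relation.ReflTransGen.eq_or_eq_of_two_cycle {α : Type*} {R : α → α → Prop}
    {u v x : α} (hfun : ∀ a b c, R a b → R a c → b = c) (huv : R u v) (hvu : R v u)
    (h : Relation.ReflTransGen R u x) : x = u ∨ x = v := by
  induction h with
  | refl => exact Or.inl rfl
  | tail _ hyz ih =>
    rcases ih with rfl | rfl
    · exact Or.inr (hfun _ _ _ hyz huv)
    · exact Or.inl (hfun _ _ _ hyz hvu)

theorem Matrix.trace_mul_self_of_mul_eq_zero {ι : Type*} [Fintype ι] [DecidableEq ι]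
    (M : Matrix ι ι ℝ) (h : ∀ i j, i ≠ j → M i j * M j i = 0) :
    trace (M * M) = ∑ i, M i i ^ 2 := by
  refine Finset.sum_congr rfl fun i _ => ?_
  rw [diag_apply, mul_apply, Finset.sum_eq_single i (fun j _ hji => h i j hji.symm)
    (by simp), sq]

theorem Finset.mul_eq_zero_of_sum_sq_eq_sq_sum {ι : Type*} [DecidableEq ι] {s : Finset ι}
    {f : ι → ℝ} (hf : ∀ i ∈ s, 0 ≤ f i) (heq : ∑ i ∈ s, f i ^ 2 = (∑ i ∈ s, f i) ^ 2)
    {i j : ι} (hi : i ∈ s) (hj : j ∈ s) (hij : i ≠ j) : f i * f j = 0 := by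
  have hgap : ∀ k ∈ s, 0 ≤ f k * (∑ l ∈ s, f l - f k) := fun k hk =>
    mul_nonneg (hf k hk) (sub_nonneg.2 (single_le_sum hf hk))
  have hzero : ∑ k ∈ s, f k * (∑ l ∈ s, f l - f k) = 0 := by
    simp only [mul_sub, sum_sub_distrib, ← sum_mul, ← sq, heq, sub_self]
  have hi0 := (sum_eq_zero_iff_of_nonneg hgap).1 hzero i hi
  have hfj : f j ≤ ∑ l ∈ s, f l - f i := by
    rw [← add_sum_erase s f hi, add_sub_cancel_left]
    exact single_le_sum (fun k hk => hf k (mem_of_mem_erase hk)) (mem_erase.2 ⟨hij.symm, hj⟩)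
  nlinarith [hf i hi, hf j hj]

theorem Ealpha_eq_of_loopless_of_antisymm {V : Type*} [Fintype V] [DecidableEq V]
    {A : Matrix V V ℝ} (hloop : ∀ v, A v v = 0) (hanti : ∀ u v, A u v * A v u = 0) (α : ℝ) :
    Ealpha α A = α ^ 2 * ∑ v, outdeg A v ^ 2 := by
  rw [Ealpha, Matrix.trace_mul_self_of_mul_eq_zero, Finset.mul_sum]
  · simp [Aalpha, hloop, mul_pow]
  · intro u v huv
    simp only [Aalpha, Matrix.add_apply, Matrix.smul_apply, Matrix.diagonal_apply_ne _ huv,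
      Matrix.diagonal_apply_ne _ huv.symm, smul_eq_mul, mul_zero, zero_add]
    linear_combination (1 - α) ^ 2 * hanti u v

noncomputable def fiberOutdeg {V : Type*} [Fintype V] [DecidableEq V] (A : Matrix V V ℝ)
    (r : V → V) (v : V) : ℝ :=
  ∑ w ∈ univ.filter (fun w => r w = r v), A v w

namespace IsGnm

variable {V : Type*} [Fintype V] [DecidableEq V] {A : Matrix V V ℝ} {S : Finset V} {r : V → V}
  {n m : ℕ}

theorem entry_nonneg (hG : IsGnm A S r n m) (u v : V) : 0 ≤ A u v := by
  rcases hG.zero_one u v with h | h <;> simp [h]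

theorem fiberOutdeg_nonneg (hG : IsGnm A S r n m) (v : V) : 0 ≤ fiberOutdeg A r v :=
  Finset.sum_nonneg fun w _ => hG.entry_nonneg v w

theorem eq_of_mem_of_r_eq (hG : IsGnm A S r n m) {u v : V} (hu : u ∈ S) (hv : v ∈ S)
    (h : r u = r v) : u = v := by
  rw [← hG.r_fix u hu, h, hG.r_fix v hv]

theorem eq_of_arc_of_arc (hG : IsGnm A S r n m) (hcycle : ∀ s ∈ S, dStar A S s = 1)
    {a b c : V} (ha : a ∈ S) (hb : b ∈ S) (hc : c ∈ S) (hab : A a b = 1) (hac : A a c = 1) :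
    b = c := by
  by_contra hbc
  have hpair : A a b + A a c ≤ dStar A S a := by
    rw [← Finset.sum_pair hbc]
    exact Finset.sum_le_sum_of_subset_of_nonneg (by simp [Finset.insert_subset_iff, hb, hc])
      fun w _ _ => hG.entry_nonneg a w
  rw [hab, hac, hcycle a ha] at hpair
  norm_num at hpair

/-- Two opposite arcs inside `S` would form a closed 2-cycle from which, out-neighbours in `S`
being unique, no third vertex of `S` is reachable. -/
theorem arc_mul_arc_eq_zero (hG : IsGnm A S r n m) (hm3 : 3 ≤ m)
    (hcycle : ∀ s ∈ S, dStar A S s = 1) (u v : V) : A u v * A v u = 0 := by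
  rcases hG.zero_one u v with h | huv
  · simp [h]
  rcases hG.zero_one v u with h | hvu
  · simp [h]
  exfalso
  rcases hG.arc_cases u v huv with ⟨hu, hv⟩ | hr
  · have hreach : ∀ x ∈ S, x = u ∨ x = v := fun x hx =>
      (hG.strong u hu x hx).eq_or_eq_of_two_cycle
        (fun a b c ⟨ha, hb, hab⟩ ⟨_, hc, hac⟩ => hG.eq_of_arc_of_arc hcycle ha hb hc hab hac)
        ⟨hu, hv, huv⟩ ⟨hv, hu, hvu⟩
    have hsub : S ⊆ {u, v} := fun x hx => by simpa using hreach x hx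
    have := (Finset.card_le_card hsub).trans (Finset.card_le_two (a := u) (b := v))
    have := hG.card_S
    omega
  · rw [hG.fiber_no_symm u v hr huv] at hvu
    norm_num at hvu

theorem arc_eq_add (hG : IsGnm A S r n m) (v w : V) :
    A v w = (if v ∈ S ∧ w ∈ S then A v w else 0) + (if r w = r v then A v w else 0) := by
  rcases hG.zero_one v w with h | h
  · simp [h]
  rcases hG.arc_cases v w h with ⟨hv, hw⟩ | hr
  · have hr : r w ≠ r v := fun hr => by
      rw [hG.eq_of_mem_of_r_eq hw hv hr, hG.loopless] at h
      norm_num at h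
    simp [hv, hw, hr]
  · have hS : ¬ (v ∈ S ∧ w ∈ S) := fun ⟨hv, hw⟩ => by
      rw [hG.eq_of_mem_of_r_eq hv hw hr, hG.loopless] at h
      norm_num at h
    simp [hS, hr]

theorem outdeg_eq (hG : IsGnm A S r n m) (hcycle : ∀ s ∈ S, dStar A S s = 1) (v : V) :
    outdeg A v = (if v ∈ S then 1 else 0) + fiberOutdeg A r v := by
  rw [outdeg, Finset.sum_congr rfl fun w _ => hG.arc_eq_add v w, Finset.sum_add_distrib,
    fiberOutdeg, Finset.sum_filter]
  congr 1
  by_cases hv : v ∈ S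
  · simp only [hv, true_and, if_true, ← hcycle v hv, dStar, Finset.sum_ite_mem,
      Finset.univ_inter]
  · simp [hv]

theorem fiberGraph_degree_eq (hG : IsGnm A S r n m) {s : V}
    [DecidableRel (fiberGraph A r s).Adj] (u : {x // r x = s}) :
    ((fiberGraph A r s).degree u : ℝ) = ∑ w : {x // r x = s}, (A u w + A w u) := by
  rw [← SimpleGraph.card_neighborFinset_eq_degree, SimpleGraph.neighborFinset_eq_filter,
    Finset.card_filter, Nat.cast_sum]
  refine Finset.sum_congr rfl fun w _ => ?_
  have hr : r u = r w := u.2.trans w.2.symm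
  by_cases huw : u = w
  · subst huw
    simp [hG.loopless]
  rcases hG.zero_one u w with h | h <;> rcases hG.zero_one w u with h' | h'
  · simp [fiberGraph, h, h']
  · simp [fiberGraph, h, h', huw]
  · simp [fiberGraph, h, h', huw]
  · rw [hG.fiber_no_symm u w hr h] at h'
    norm_num at h'

theorem sum_fiberOutdeg_fiber (hG : IsGnm A S r n m) {s : V} (hs : s ∈ S) :
    ∑ v ∈ univ.filter (fun v => r v = s), fiberOutdeg A r v = fibCard r s - 1 := by
  classical
  let T := fiberGraph A r s
  have hsub : ∀ f : V → ℝ, ∑ v ∈ univ.filter (fun v => r v = s), f v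
      = ∑ v : {x // r x = s}, f v := fun f => Finset.sum_subtype _ (by simp) f
  have harcs : ∑ v ∈ univ.filter (fun v => r v = s), fiberOutdeg A r v
      = ∑ v : {x // r x = s}, ∑ w : {x // r x = s}, A v w := by
    rw [hsub]
    refine Finset.sum_congr rfl fun v _ => ?_
    rw [fiberOutdeg, v.2, hsub]
  have hdeg : 2 * (#T.edgeFinset : ℝ)
      = 2 * ∑ v : {x // r x = s}, ∑ w : {x // r x = s}, A v w := calc
    2 * (#T.edgeFinset : ℝ) = ∑ v, (T.degree v : ℝ) := by
      exact_mod_cast T.sum_degrees_eq_twice_card_edges.symm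
    _ = ∑ v : {x // r x = s}, ∑ w : {x // r x = s}, (A v w + A w v) :=
      Finset.sum_congr rfl fun v _ => hG.fiberGraph_degree_eq v
    _ = _ := by
      rw [two_mul]
      simp only [Finset.sum_add_distrib]
      congr 1
      exact Finset.sum_comm
  have hedges : (#T.edgeFinset : ℝ) = fibCard r s - 1 := by
    rw [fibCard, ← Fintype.card_subtype, ← (hG.fiber_tree s hs).card_edgeFinset]
    push_cast
    ring
  linarith

theorem sum_fiberOutdeg (hG : IsGnm A S r n m) : ∑ v, fiberOutdeg A r v = n - m := by
  have hfibers : ∀ f : V → ℝ, ∑ s ∈ S, ∑ v ∈ univ.filter (fun v => r v = s), f v = ∑ v, f v :=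
    fun f => Finset.sum_fiberwise_of_maps_to (fun v _ => hG.r_mem v) f
  have hcount : ∑ s ∈ S, (fibCard r s : ℝ) = n := by
    simpa [fibCard, hG.card_V] using hfibers fun _ => (1 : ℝ)
  rw [← hfibers, Finset.sum_congr rfl fun s hs => hG.sum_fiberOutdeg_fiber hs,
    Finset.sum_sub_distrib, hcount]
  simp [hG.card_S]

theorem sum_outdeg (hG : IsGnm A S r n m) (hcycle : ∀ s ∈ S, dStar A S s = 1) :
    ∑ v, outdeg A v = n := by
  simp only [hG.outdeg_eq hcycle, Finset.sum_add_distrib, Finset.sum_ite_mem, Finset.univ_inter,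
    Finset.sum_const, hG.card_S, hG.sum_fiberOutdeg]
  simp

theorem sum_outdeg_sq_eq (hG : IsGnm A S r n m) (hcycle : ∀ s ∈ S, dStar A S s = 1) :
    ∑ v, outdeg A v ^ 2 = n + ∑ v, (outdeg A v - 1) ^ 2 := by
  have hexpand : ∑ v, (outdeg A v - 1) ^ 2 = ∑ v, outdeg A v ^ 2 - 2 * ∑ v, outdeg A v + n := by
    simp [sub_sq, Finset.sum_add_distrib, Finset.sum_sub_distrib, Finset.mul_sum, hG.card_V]
  rw [hexpand, hG.sum_outdeg hcycle]
  ring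

theorem sum_outdeg_sq_add_gaps (hG : IsGnm A S r n m) (hcycle : ∀ s ∈ S, dStar A S s = 1) :
    ∑ v, outdeg A v ^ 2 + 2 * ∑ v ∈ Sᶜ, fiberOutdeg A r v
      + ((∑ v, fiberOutdeg A r v) ^ 2 - ∑ v, fiberOutdeg A r v ^ 2)
      = ((n : ℝ) - m + 1) ^ 2 + m - 1 := by
  set t := fiberOutdeg A r
  have hsq : ∀ v, outdeg A v ^ 2 = (if v ∈ S then 1 + 2 * t v else 0) + t v ^ 2 := fun v => by
    rw [hG.outdeg_eq hcycle]
    split_ifs <;> ring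
  have hsplit := Finset.sum_add_sum_compl S t
  simp only [hsq, Finset.sum_add_distrib, Finset.sum_ite_mem, Finset.univ_inter,
    ← Finset.mul_sum, Finset.sum_const, hG.card_S, nsmul_eq_mul, mul_one] at hsplit ⊢
  rw [hG.sum_fiberOutdeg] at hsplit ⊢
  linear_combination 2 * hsplit

theorem sum_outdeg_sq_le (hG : IsGnm A S r n m) (hcycle : ∀ s ∈ S, dStar A S s = 1) :
    ∑ v, outdeg A v ^ 2 ≤ ((n : ℝ) - m + 1) ^ 2 + m - 1 := by
  have := hG.sum_outdeg_sq_add_gaps hcycle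
  have := Finset.sum_nonneg fun v (_ : v ∈ Sᶜ) => hG.fiberOutdeg_nonneg v
  have := Finset.sum_sq_le_sq_sum_of_nonneg fun v (_ : v ∈ univ) => hG.fiberOutdeg_nonneg v
  linarith

theorem sum_outdeg_sq_eq_iff (hG : IsGnm A S r n m) (hcycle : ∀ s ∈ S, dStar A S s = 1) :
    ∑ v, outdeg A v ^ 2 = ((n : ℝ) - m + 1) ^ 2 + m - 1 ↔
      ∃ v ∈ S, ∀ u, u ≠ v → fiberOutdeg A r u = 0 := by
  set t := fiberOutdeg A r
  have ht : ∀ v ∈ (univ : Finset V), 0 ≤ t v := fun v _ => hG.fiberOutdeg_nonneg v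
  have hgaps := hG.sum_outdeg_sq_add_gaps hcycle
  have hgap₁ := Finset.sum_nonneg fun v (_ : v ∈ Sᶜ) => ht v (mem_univ v)
  have hgap₂ := Finset.sum_sq_le_sq_sum_of_nonneg ht
  constructor
  · intro heq
    have hout : ∀ u, u ∉ S → t u = 0 := fun u hu =>
      (Finset.sum_eq_zero_iff_of_nonneg fun v _ => ht v (mem_univ v)).1 (by linarith) u
        (Finset.mem_compl.2 hu)
    have hsum : ∑ v, t v ≠ 0 := by
      rw [hG.sum_fiberOutdeg, sub_ne_zero]
      exact_mod_cast hG.m_lt_n.ne'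
    obtain ⟨v, -, hv⟩ := Finset.exists_ne_zero_of_sum_ne_zero hsum
    refine ⟨v, by_contra fun hvS => hv (hout v hvS), fun u hu => ?_⟩
    have := Finset.mul_eq_zero_of_sum_sq_eq_sq_sum ht (by linarith) (mem_univ u) (mem_univ v) hu
    exact (mul_eq_zero.1 this).resolve_right hv
  · rintro ⟨v, hvS, hv⟩
    have hgap₁_zero : ∑ u ∈ Sᶜ, t u = 0 :=
      Finset.sum_eq_zero fun u hu => hv u fun h => Finset.mem_compl.1 hu (h ▸ hvS)
    have hsingle : ∀ f : ℝ → ℝ, f 0 = 0 → ∑ u, f (t u) = f (t v) := fun f hf =>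
      Finset.sum_eq_single v (fun u _ hu => by rw [hv u hu, hf]) (by simp)
    have hsq := hsingle (· ^ 2) (by simp)
    have hid := hsingle id rfl
    simp only [id] at hid
    rw [hsq, hid, hgap₁_zero] at hgaps
    linarith

theorem inTrees_iff (hG : IsGnm A S r n m) (hcycle : ∀ s ∈ S, dStar A S s = 1) :
    InTrees A S r ↔ ∀ v, outdeg A v = 1 := by
  have hroot : ∀ s ∈ S, fiberOutdeg A r s = ∑ w ∈ univ.filter (fun w => r w = s), A s w :=
    fun s hs => by rw [fiberOutdeg, hG.r_fix s hs]
  simp only [hG.outdeg_eq hcycle, InTrees]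
  constructor
  · rintro ⟨hleaf, hrootdeg⟩ v
    by_cases hv : v ∈ S
    · simp [hv, hroot v hv, hrootdeg v hv]
    · rw [if_neg hv, zero_add]
      exact hleaf v hv
  · intro h
    refine ⟨fun v hv => ?_, fun s hs => ?_⟩
    · show fiberOutdeg A r v = 1
      simpa [hv] using h v
    · rw [← hroot s hs]
      simpa [hs] using h s

theorem outStarAt_iff (hG : IsGnm A S r n m) {v : V} (hv : v ∈ S) :
    OutStarAt A S r v ↔ ∀ u, u ≠ v → fiberOutdeg A r u = 0 := by
  have hfiber_zero : ∀ s ∈ S, fibCard r s = 1 → ∀ u, r u = s → fiberOutdeg A r u = 0 :=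
    fun s hs hcard u hu => by
      have hsum := hG.sum_fiberOutdeg_fiber hs
      rw [hcard, Nat.cast_one, sub_self] at hsum
      exact (Finset.sum_eq_zero_iff_of_nonneg fun w _ => hG.fiberOutdeg_nonneg w).1 hsum u
        (by simp [hu])
  constructor
  · rintro ⟨htrivial, hstar⟩ u hu
    by_cases hru : r u = v
    · exact Finset.sum_eq_zero fun w _ =>
        (hG.zero_one u w).resolve_right fun h => hu (hstar u w hru h)
    · exact hfiber_zero (r u) (hG.r_mem u) (htrivial _ (hG.r_mem u) hru) u rfl
  · intro h
    refine ⟨fun s hs hsv => ?_, fun u w hru huw => by_contra fun hu => ?_⟩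
    · have hsum := hG.sum_fiberOutdeg_fiber hs
      rw [Finset.sum_eq_zero fun u hu => h u fun huv => ?_] at hsum
      · exact_mod_cast sub_eq_zero.1 hsum.symm
      · exact hsv (by rw [← (Finset.mem_filter.1 hu).2, huv, hG.r_fix v hv])
    · have huS : u ∉ S := fun huS => hu (by rw [← hru, hG.r_fix u huS])
      have hrw : r w = r u := by
        rcases hG.arc_cases u w huw with ⟨huS', -⟩ | h
        · exact absurd huS' huS
        · exact h.symm
      have hle : A u w ≤ fiberOutdeg A r u :=
        Finset.single_le_sum (fun x _ => hG.entry_nonneg u x) (by simp [hrw])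
      rw [huw, h u hu] at hle
      norm_num at hle

end IsGnm

theorem stmt13_general {V : Type*} [Fintype V] [DecidableEq V] (A : Matrix V V ℝ) (S : Finset V)
    (r : V → V) (n m : ℕ) (hG : IsGnm A S r n m) (hm3 : 3 ≤ m)
    (hcycle : ∀ s ∈ S, dStar A S s = 1)
    (α : ℝ) :
    (α ^ 2 * (n : ℝ) ≤ Ealpha α A ∧
      Ealpha α A ≤ α ^ 2 * (((n : ℝ) - m + 1) ^ 2 + (m : ℝ) - 1)) ∧
    (0 < α →
      ((Ealpha α A = α ^ 2 * (n : ℝ) ↔ InTrees A S r) ∧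
       (Ealpha α A = α ^ 2 * (((n : ℝ) - m + 1) ^ 2 + (m : ℝ) - 1) ↔
          ∃ v ∈ S, OutStarAt A S r v))) := by
  have hE := Ealpha_eq_of_loopless_of_antisymm hG.loopless (hG.arc_mul_arc_eq_zero hm3 hcycle) α
  have hlow := hG.sum_outdeg_sq_eq hcycle
  have hdev : 0 ≤ ∑ v, (outdeg A v - 1) ^ 2 := Finset.sum_nonneg fun v _ => sq_nonneg _
  refine ⟨⟨?_, ?_⟩, fun hα => ⟨?_, ?_⟩⟩
  · rw [hE, hlow]
    exact mul_le_mul_of_nonneg_left (le_add_of_nonneg_right hdev) (sq_nonneg α)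
  · rw [hE]
    exact mul_le_mul_of_nonneg_left (hG.sum_outdeg_sq_le hcycle) (sq_nonneg α)
  · rw [hE, mul_right_inj' (pow_ne_zero 2 hα.ne'), hlow, add_eq_left, hG.inTrees_iff hcycle,
      Finset.sum_eq_zero_iff_of_nonneg fun v _ => sq_nonneg _]
    simp [sub_eq_zero]
  · rw [hE, mul_right_inj' (pow_ne_zero 2 hα.ne'), hG.sum_outdeg_sq_eq_iff hcycle]
    exact exists_congr fun v => and_congr_right fun hv => (hG.outStarAt_iff hv).symm

/-- For `G ∈ 𝒢_n^m` whose strong component is a directed cycle of length `m ≥ 3`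
(equivalently, being strongly connected, every vertex of `S` has within-`S` outdegree `1`),
`α²n ≤ E_α(G) ≤ α²((n-m+1)² + m - 1)`; for `0 < α < 1` the lower bound is attained iff all
hung trees are in-trees, and the upper bound iff all hung trees but one are trivial and the
remaining one is an out-star of size `n-m+1` centred at its cycle vertex. -/
theorem stmt13 {V : Type*} [Fintype V] [DecidableEq V] (A : Matrix V V ℝ) (S : Finset V)
    (r : V → V) (n m : ℕ) (hG : IsGnm A S r n m) (hm3 : 3 ≤ m)
    (hcycle : ∀ s ∈ S, dStar A S s = 1)
    (α : ℝ) (hα0 : 0 ≤ α) (hα1 : α < 1) :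
    (α ^ 2 * (n : ℝ) ≤ Ealpha α A ∧
      Ealpha α A ≤ α ^ 2 * (((n : ℝ) - m + 1) ^ 2 + (m : ℝ) - 1)) ∧
    (0 < α →
      ((Ealpha α A = α ^ 2 * (n : ℝ) ↔ InTrees A S r) ∧
       (Ealpha α A = α ^ 2 * (((n : ℝ) - m + 1) ^ 2 + (m : ℝ) - 1) ↔
          ∃ v ∈ S, OutStarAt A S r v))) :=
  stmt13_general A S r n m hG hm3 hcycle α
end
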